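/- Let G be the coloured graph of the inductive construction (G_1 a single edge e_1 = v_{11}v_{12} of colour 1; each G_i obtained from G_{i−1} by adding a new vertex joined by two edges of colour i to two distinct old vertices; G = G_{n−1}). Then for every pair of vertices u, v of G with {u,v} ≠ {v_{11}, v_{12}}, there exist two edge-disjoint rainbow paths P_1, P_2 from u to v with |P_1| + |P_2| ≤ n. -/

import Mathlib

open scoped Classical

namespace RainbowPaper

/-- The inductively constructed coloured graph on `n + 2` vertices: vertex `0` and
`1` are `v₁₁` and `v₁₂`, joined by the edge of colour `1`; every vertex `i ≥ 2` is
joined to the two distinct earlier vertices `f i` and `g i` by two edges of colour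
`i`.  (Since each edge joins a vertex to a strictly smaller one, the colour of an
edge is the larger of its two endpoints.) -/
def constructionGraph (n : ℕ) (f g : Fin (n + 2) → Fin (n + 2)) :
    SimpleGraph (Fin (n + 2)) where
  Adj a b := a ≠ b ∧ (s(a, b) = s(0, 1) ∨
    ∃ i : Fin (n + 2), 2 ≤ i.val ∧ (s(a, b) = s(i, f i) ∨ s(a, b) = s(i, g i)))
  symm := ⟨by
    rintro a b ⟨h1, h2⟩
    refine ⟨h1.symm, ?_⟩
    rw [Sym2.eq_swap]
    exact h2⟩
  loopless := ⟨fun a h => h.1 rfl⟩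

/-- The hypotheses of the construction: each new vertex `i ≥ 2` is joined to two
distinct earlier vertices. -/
def ConstructionHyp (n : ℕ) (f g : Fin (n + 2) → Fin (n + 2)) : Prop :=
  ∀ i : Fin (n + 2), 2 ≤ i.val → f i < i ∧ g i < i ∧ f i ≠ g i

/-- The colour of an edge of the construction graph: the larger of its two
endpoints (with the initial edge `{0, 1}` getting colour `1`). -/
def edgeColour {n : ℕ} : Sym2 (Fin (n + 2)) → ℕ :=
  Sym2.lift ⟨fun a b => max a.val b.val, fun a b => by simp [max_comm]⟩

/-- A rainbow path: a path whose edges receive pairwise distinct colours. -/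
def IsRainbowPath {V : Type*} (G : SimpleGraph V) (col : Sym2 V → ℕ) {u v : V}
    (p : G.Walk u v) : Prop :=
  p.IsPath ∧ (p.edges.map col).Nodup

/-- Two walks are edge-disjoint if no edge lies on both. -/
def EdgeDisjoint {V : Type*} {G : SimpleGraph V} {u v u' v' : V}
    (p : G.Walk u v) (q : G.Walk u' v') : Prop :=
  ∀ e, e ∈ p.edges → e ∉ q.edges

/-!
Since the colour of an edge is its larger endpoint, a path stays rainbow when a vertex larger
than all of its vertices is prepended; all paths of the argument are built this way. By
induction on `k`, the vertices `≤ k` carry rainbow fans (paths from `x` to `a` and to `b` meeting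
only at `x`) and rainbow linkages (disjoint paths from `p`, `q` to `a`, `b` in some order): the
top vertex `k + 1` is routed through one of its two lower neighbours. A source may coincide with
a target, which reduces such a case to a fan and keeps the induction short. For `v < u`, the fan
from `v` to the two lower neighbours of `u`, extended by `u`, gives two paths meeting only at
`u` and `v`; hence they are edge-disjoint and have at most `n + 2` edges in total.
-/

open SimpleGraph Walk

section Paths

variable {V : Type*} {G : SimpleGraph V} {u v : V}

lemma edgeDisjoint_of_support_inter {P₁ P₂ : G.Walk u v}
    (hshare : ∀ w ∈ P₁.support, w ∈ P₂.support → w = u ∨ w = v)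
    (hmiss : s(u, v) ∉ P₁.edges ∨ s(u, v) ∉ P₂.edges) : EdgeDisjoint P₁ P₂ := by
  intro e he₁ he₂
  induction e with
  | h c d =>
    have hcd : c ≠ d := (P₁.adj_of_mem_edges he₁).ne
    have hc := hshare c (P₁.fst_mem_support_of_mem_edges he₁)
      (P₂.fst_mem_support_of_mem_edges he₂)
    have hd := hshare d (P₁.snd_mem_support_of_mem_edges he₁)
      (P₂.snd_mem_support_of_mem_edges he₂)
    have huv : s(c, d) = s(u, v) := by
      rcases hc with rfl | rfl <;> rcases hd with rfl | rfl <;> simp_all [Sym2.eq_swap]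
    rw [huv] at he₁ he₂
    tauto

lemma length_add_length_le_card [Fintype V] {P₁ P₂ : G.Walk u v}
    (h₁ : P₁.IsPath) (h₂ : P₂.IsPath)
    (hshare : ∀ w ∈ P₁.support, w ∈ P₂.support → w = u ∨ w = v) :
    P₁.length + P₂.length ≤ Fintype.card V := by
  classical
  have hcard₁ : P₁.support.toFinset.card = P₁.length + 1 := by
    rw [List.toFinset_card_of_nodup h₁.support_nodup, length_support]
  have hcard₂ : P₂.support.toFinset.card = P₂.length + 1 := by
    rw [List.toFinset_card_of_nodup h₂.support_nodup, length_support]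
  have hinter : (P₁.support.toFinset ∩ P₂.support.toFinset).card ≤ 2 := by
    refine (Finset.card_le_card fun w hw => ?_).trans (Finset.card_le_two (a := u) (b := v))
    simp only [Finset.mem_inter, List.mem_toFinset] at hw
    simpa using hshare w hw.1 hw.2
  have hunion := Finset.card_le_univ (P₁.support.toFinset ∪ P₂.support.toFinset)
  have := Finset.card_union_add_card_inter P₁.support.toFinset P₂.support.toFinset
  omega

lemma not_mem_edges_cons_of_ne {c : V} {h : G.Adj u c} {R : G.Walk c v}
    (hP : (cons h R).IsPath) (hcv : c ≠ v) : s(u, v) ∉ (cons h R).edges := by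
  rw [edges_cons, List.mem_cons, Sym2.eq_iff, not_or]
  refine ⟨by rintro (⟨-, rfl⟩ | ⟨rfl, -⟩) <;> simp_all, fun he => ?_⟩
  exact ((cons_isPath_iff h R).1 hP).2 (R.fst_mem_support_of_mem_edges he)

end Paths

section Rainbow

variable {n : ℕ} {G : SimpleGraph (Fin (n + 2))}

lemma edgeColour_mk (a b : Fin (n + 2)) : edgeColour s(a, b) = max a.val b.val := rfl

lemma IsRainbowPath.reverse {x y : Fin (n + 2)} {p : G.Walk x y}
    (hp : IsRainbowPath G edgeColour p) : IsRainbowPath G edgeColour p.reverse :=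
  ⟨hp.1.reverse, by simpa [edges_reverse, List.map_reverse] using hp.2⟩

def IsRainbowPathLE (G : SimpleGraph (Fin (n + 2))) (k : ℕ) {x y : Fin (n + 2)}
    (p : G.Walk x y) : Prop :=
  IsRainbowPath G edgeColour p ∧ ∀ w ∈ p.support, w.val ≤ k

namespace IsRainbowPathLE

variable {k m : ℕ} {x y c : Fin (n + 2)}

lemma nil (hx : x.val ≤ k) : IsRainbowPathLE G k (Walk.nil : G.Walk x x) :=
  ⟨⟨IsPath.nil, by simp⟩, by simpa using hx⟩

lemma single (h : G.Adj x y) (hx : x.val ≤ k) (hy : y.val ≤ k) :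
    IsRainbowPathLE G k (Walk.cons h Walk.nil) :=
  ⟨⟨by simp [h.ne], by simp⟩, by simp [hx, hy]⟩

lemma mono {p : G.Walk x y} (hp : IsRainbowPathLE G k p) (hkm : k ≤ m) :
    IsRainbowPathLE G m p :=
  ⟨hp.1, fun w hw => (hp.2 w hw).trans hkm⟩

lemma reverse {p : G.Walk x y} (hp : IsRainbowPathLE G k p) :
    IsRainbowPathLE G k p.reverse :=
  ⟨hp.1.reverse, fun w hw => hp.2 w (by simpa using hw)⟩

/-- The new edge has colour `x`, larger than every colour on `R`. -/
lemma cons {R : G.Walk c y} (hR : IsRainbowPathLE G k R) (h : G.Adj x c)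
    (hkx : k < x.val) (hxm : x.val ≤ m) : IsRainbowPathLE G m (cons h R) := by
  have hlt : ∀ w ∈ R.support, w.val < x.val := fun w hw => (hR.2 w hw).trans_lt hkx
  refine ⟨⟨(cons_isPath_iff h R).2 ⟨hR.1.1, fun hx => (hlt x hx).false⟩, ?_⟩, ?_⟩
  · rw [edges_cons, List.map_cons, List.nodup_cons]
    refine ⟨fun hmem => ?_, hR.1.2⟩
    obtain ⟨e, he, hcol⟩ := List.mem_map.1 hmem
    induction e with
    | h a b =>
      have ha := hlt a (R.fst_mem_support_of_mem_edges he)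
      have hb := hlt b (R.snd_mem_support_of_mem_edges he)
      have hc := hlt c R.start_mem_support
      simp only [edgeColour_mk] at hcol
      omega
  · simp only [support_cons, List.mem_cons, forall_eq_or_imp]
    exact ⟨hxm, fun w hw => (hR.2 w hw).trans (by omega)⟩

lemma concat {R : G.Walk y c} (hR : IsRainbowPathLE G k R) (h : G.Adj c x)
    (hkx : k < x.val) (hxm : x.val ≤ m) : IsRainbowPathLE G m (R.concat h) := by
  have := (hR.reverse.cons h.symm hkx hxm).reverse
  rwa [← reverse_concat, reverse_reverse] at this

end IsRainbowPathLE

end Rainbow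

section FansAndLinkages

variable {n : ℕ} {G : SimpleGraph (Fin (n + 2))} {k m : ℕ} {x p q a b a' b' : Fin (n + 2)}

def RainbowFan (G : SimpleGraph (Fin (n + 2))) (k : ℕ) (x a b : Fin (n + 2)) : Prop :=
  ∃ (Q₁ : G.Walk x a) (Q₂ : G.Walk x b), IsRainbowPathLE G k Q₁ ∧ IsRainbowPathLE G k Q₂ ∧
    ∀ w ∈ Q₁.support, w ∈ Q₂.support → w = x

def RainbowLinkage (G : SimpleGraph (Fin (n + 2))) (k : ℕ) (p q a b : Fin (n + 2)) : Prop :=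
  ∃ a' b', s(a', b') = s(a, b) ∧ ∃ (R₁ : G.Walk p a') (R₂ : G.Walk q b'),
    IsRainbowPathLE G k R₁ ∧ IsRainbowPathLE G k R₂ ∧ ∀ w ∈ R₁.support, w ∉ R₂.support

def HasRainbowFans (G : SimpleGraph (Fin (n + 2))) (k : ℕ) : Prop :=
  ∀ x a b : Fin (n + 2), a ≠ b → x.val ≤ k → a.val ≤ k → b.val ≤ k → RainbowFan G k x a b

def HasRainbowLinkages (G : SimpleGraph (Fin (n + 2))) (k : ℕ) : Prop :=
  ∀ p q a b : Fin (n + 2), p ≠ q → a ≠ b → p.val ≤ k → q.val ≤ k → a.val ≤ k → b.val ≤ k →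
    RainbowLinkage G k p q a b

namespace RainbowFan

lemma swap : RainbowFan G k x a b → RainbowFan G k x b a := by
  rintro ⟨Q₁, Q₂, h₁, h₂, hshare⟩
  exact ⟨Q₂, Q₁, h₂, h₁, fun w hw₂ hw₁ => hshare w hw₁ hw₂⟩

lemma mono (hkm : k ≤ m) : RainbowFan G k x a b → RainbowFan G m x a b := by
  rintro ⟨Q₁, Q₂, h₁, h₂, hshare⟩
  exact ⟨Q₁, Q₂, h₁.mono hkm, h₂.mono hkm, hshare⟩

lemma of_mk_eq (h : s(a', b') = s(a, b)) (hF : RainbowFan G k x a' b') : RainbowFan G k x a b := by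
  rcases Sym2.eq_iff.1 h with ⟨rfl, rfl⟩ | ⟨rfl, rfl⟩
  exacts [hF, hF.swap]

lemma of_isRainbowPathLE {P : G.Walk x b} (hP : IsRainbowPathLE G k P) : RainbowFan G k x x b :=
  ⟨Walk.nil, P, .nil (hP.2 x P.start_mem_support), hP, by simp⟩

lemma rainbowLinkage (hF : RainbowFan G k q b a) (hqa : q ≠ a) : RainbowLinkage G k a q a b := by
  obtain ⟨Q₁, Q₂, h₁, h₂, hshare⟩ := hF
  refine ⟨a, b, rfl, Walk.nil, Q₁, .nil (h₂.2 a Q₂.end_mem_support), h₁, ?_⟩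
  simp only [support_nil, List.mem_singleton, forall_eq]
  exact fun ha => hqa (hshare a ha Q₂.end_mem_support).symm

end RainbowFan

namespace RainbowLinkage

lemma swap_sources : RainbowLinkage G k p q a b → RainbowLinkage G k q p a b := by
  rintro ⟨a', b', hab, R₁, R₂, h₁, h₂, hdisj⟩
  exact ⟨b', a', Sym2.eq_swap.trans hab, R₂, R₁, h₂, h₁, fun w hw₂ hw₁ => hdisj w hw₁ hw₂⟩

lemma swap_targets : RainbowLinkage G k p q a b → RainbowLinkage G k p q b a := by
  rintro ⟨a', b', hab, R₁, R₂, h₁, h₂, hdisj⟩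
  exact ⟨a', b', hab.trans Sym2.eq_swap, R₁, R₂, h₁, h₂, hdisj⟩

lemma reverse : RainbowLinkage G k p q a b → RainbowLinkage G k a b p q := by
  rintro ⟨a', b', hab, R₁, R₂, h₁, h₂, hdisj⟩
  rcases Sym2.eq_iff.1 hab with ⟨rfl, rfl⟩ | ⟨rfl, rfl⟩
  · exact ⟨p, q, rfl, R₁.reverse, R₂.reverse, h₁.reverse, h₂.reverse, by simpa using hdisj⟩
  · refine ⟨q, p, Sym2.eq_swap, R₂.reverse, R₁.reverse, h₂.reverse, h₁.reverse, ?_⟩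
    simpa using fun w hw₂ hw₁ => hdisj w hw₁ hw₂

lemma mono (hkm : k ≤ m) : RainbowLinkage G k p q a b → RainbowLinkage G m p q a b := by
  rintro ⟨a', b', hab, R₁, R₂, h₁, h₂, hdisj⟩
  exact ⟨a', b', hab, R₁, R₂, h₁.mono hkm, h₂.mono hkm, hdisj⟩

end RainbowLinkage

end FansAndLinkages

section Construction

variable {n k : ℕ} {f g : Fin (n + 2) → Fin (n + 2)} {x y p q a b : Fin (n + 2)}

lemma constructionGraph_adj_one_zero : (constructionGraph n f g).Adj 1 0 :=
  ⟨by simp, Or.inl Sym2.eq_swap⟩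

lemma constructionGraph_adj_left (hfg : ConstructionHyp n f g) (hx : 2 ≤ x.val) :
    (constructionGraph n f g).Adj x (f x) :=
  ⟨(hfg x hx).1.ne', Or.inr ⟨x, hx, Or.inl rfl⟩⟩

lemma constructionGraph_adj_right (hfg : ConstructionHyp n f g) (hx : 2 ≤ x.val) :
    (constructionGraph n f g).Adj x (g x) :=
  ⟨(hfg x hx).2.1.ne', Or.inr ⟨x, hx, Or.inr rfl⟩⟩

lemma exists_lt_adj_ne (hfg : ConstructionHyp n f g) (hx : 2 ≤ x.val) (b : Fin (n + 2)) :
    ∃ c < x, (constructionGraph n f g).Adj x c ∧ c ≠ b := by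
  obtain ⟨hf, hg, hfg'⟩ := hfg x hx
  by_cases hb : f x = b
  · exact ⟨g x, hg, constructionGraph_adj_right hfg hx, fun h => hfg' (hb.trans h.symm)⟩
  · exact ⟨f x, hf, constructionGraph_adj_left hfg hx, hb⟩

lemma exists_rainbowPathLE_of_lt (hfg : ConstructionHyp n f g) (hyx : y < x) :
    ∃ P : (constructionGraph n f g).Walk x y, IsRainbowPathLE _ x.val P := by
  induction x using WellFoundedLT.induction generalizing y with
  | ind x ih =>
    by_cases hx : 2 ≤ x.val
    · obtain ⟨c, hcx, hadj, hcy⟩ := exists_lt_adj_ne hfg hx y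
      rcases hcy.lt_or_gt with hcy | hcy
      · obtain ⟨P, hP⟩ := ih y hyx hcy
        exact ⟨cons hadj P.reverse, hP.reverse.cons hadj hyx le_rfl⟩
      · obtain ⟨P, hP⟩ := ih c hcx hcy
        exact ⟨cons hadj P, hP.cons hadj hcx le_rfl⟩
    · obtain rfl : x = 1 := Fin.ext (by rw [Fin.val_one]; omega)
      obtain rfl : y = 0 := Fin.ext (by rw [Fin.val_zero]; omega)
      exact ⟨_, .single constructionGraph_adj_one_zero le_rfl (by simp)⟩

lemma exists_rainbowPathLE (hfg : ConstructionHyp n f g) (x y : Fin (n + 2)) :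
    ∃ P : (constructionGraph n f g).Walk x y, IsRainbowPathLE _ (max x.val y.val) P := by
  rcases lt_trichotomy x y with hxy | rfl | hxy
  · obtain ⟨P, hP⟩ := exists_rainbowPathLE_of_lt hfg hxy
    exact ⟨P.reverse, hP.reverse.mono (le_max_right _ _)⟩
  · exact ⟨Walk.nil, .nil (le_max_left _ _)⟩
  · obtain ⟨P, hP⟩ := exists_rainbowPathLE_of_lt hfg hxy
    exact ⟨P, hP.mono (le_max_left _ _)⟩

lemma rainbowFan_of_target_top (hfg : ConstructionHyp n f g)
    (hF : HasRainbowFans (constructionGraph n f g) k) (hxa : x ≠ a) (hxb : x ≠ b) (hab : a ≠ b)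
    (ha : a.val = k + 1) (hx : x.val ≤ k + 1) (hb : b.val ≤ k + 1) :
    RainbowFan (constructionGraph n f g) (k + 1) x a b := by
  obtain ⟨c, hca, hadj, hcb⟩ := exists_lt_adj_ne hfg (x := a) (by omega) b
  obtain ⟨Q₁, Q₂, h₁, h₂, hshare⟩ := hF x c b hcb (by omega) (by omega) (by omega)
  refine ⟨Q₁.concat hadj.symm, Q₂, h₁.concat hadj.symm (by omega) ha.le, h₂.mono k.le_succ,
    fun w hw₁ hw₂ => ?_⟩
  rw [support_concat, List.mem_append, List.mem_singleton] at hw₁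
  rcases hw₁ with hw₁ | rfl
  · exact hshare w hw₁ hw₂
  · exact absurd (h₂.2 _ hw₂) (by omega)

lemma rainbowFan_of_source_top (hfg : ConstructionHyp n f g)
    (hL : HasRainbowLinkages (constructionGraph n f g) k) (hab : a ≠ b)
    (hx : x.val = k + 1) (ha : a.val ≤ k) (hb : b.val ≤ k) :
    RainbowFan (constructionGraph n f g) (k + 1) x a b := by
  have hx₂ : 2 ≤ x.val := by omega
  obtain ⟨hf, hg, hfg'⟩ := hfg x hx₂
  obtain ⟨a', b', hab', R₁, R₂, h₁, h₂, hdisj⟩ :=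
    hL (f x) (g x) a b hfg' hab (by omega) (by omega) ha hb
  refine .of_mk_eq hab' ⟨cons (constructionGraph_adj_left hfg hx₂) R₁,
    cons (constructionGraph_adj_right hfg hx₂) R₂, h₁.cons _ (by omega) hx.le,
    h₂.cons _ (by omega) hx.le, fun w hw₁ hw₂ => ?_⟩
  rw [support_cons, List.mem_cons] at hw₁ hw₂
  rcases hw₁ with rfl | hw₁
  · rfl
  · exact hw₂.resolve_right (hdisj w hw₁)

lemma rainbowLinkage_of_source_top (hfg : ConstructionHyp n f g)
    (hL : HasRainbowLinkages (constructionGraph n f g) k) (hpq : p ≠ q) (hab : a ≠ b)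
    (hpa : p ≠ a) (hpb : p ≠ b) (hp : p.val = k + 1) (hq : q.val ≤ k + 1) (ha : a.val ≤ k + 1)
    (hb : b.val ≤ k + 1) : RainbowLinkage (constructionGraph n f g) (k + 1) p q a b := by
  obtain ⟨e, hep, hadj, heq⟩ := exists_lt_adj_ne hfg (x := p) (by omega) q
  obtain ⟨a', b', hab', R₁, R₂, h₁, h₂, hdisj⟩ :=
    hL e q a b heq hab (by omega) (by omega) (by omega) (by omega)
  refine ⟨a', b', hab', cons hadj R₁, R₂, h₁.cons hadj (by omega) hp.le, h₂.mono k.le_succ, ?_⟩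
  simp only [support_cons, List.mem_cons, forall_eq_or_imp]
  exact ⟨fun hp' => absurd (h₂.2 p hp') (by omega), hdisj⟩

lemma hasRainbowFans_succ (hfg : ConstructionHyp n f g)
    (hF : HasRainbowFans (constructionGraph n f g) k)
    (hL : HasRainbowLinkages (constructionGraph n f g) k) :
    HasRainbowFans (constructionGraph n f g) (k + 1) := by
  intro x a b hab hx ha hb
  by_cases hxa : x = a
  · obtain ⟨P, hP⟩ := exists_rainbowPathLE hfg x b
    exact hxa ▸ .of_isRainbowPathLE (hP.mono (by omega))
  by_cases hxb : x = b
  · obtain ⟨P, hP⟩ := exists_rainbowPathLE hfg x a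
    exact hxb ▸ (RainbowFan.of_isRainbowPathLE (hP.mono (by omega))).swap
  rcases (by omega : a.val = k + 1 ∨ b.val = k + 1 ∨ x.val = k + 1 ∨
      (x.val ≤ k ∧ a.val ≤ k ∧ b.val ≤ k)) with ha' | hb' | hx' | ⟨hx', ha', hb'⟩
  · exact rainbowFan_of_target_top hfg hF hxa hxb hab ha' hx hb
  · exact (rainbowFan_of_target_top hfg hF hxb hxa hab.symm hb' hx ha).swap
  · exact rainbowFan_of_source_top hfg hL hab hx' (by omega) (by omega)
  · exact (hF x a b hab hx' ha' hb').mono k.le_succ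

lemma hasRainbowLinkages_succ (hfg : ConstructionHyp n f g)
    (hL : HasRainbowLinkages (constructionGraph n f g) k)
    (hF : HasRainbowFans (constructionGraph n f g) (k + 1)) :
    HasRainbowLinkages (constructionGraph n f g) (k + 1) := by
  intro p q a b hpq hab hp hq ha hb
  by_cases hpa : p = a
  · exact hpa ▸ (hF q b a hab.symm hq hb ha).rainbowLinkage (hpa ▸ hpq.symm)
  by_cases hpb : p = b
  · exact hpb ▸ ((hF q a b hab hq ha hb).rainbowLinkage (hpb ▸ hpq.symm)).swap_targets
  by_cases hqa : q = a
  · exact hqa ▸ ((hF p b a hab.symm hp hb ha).rainbowLinkage (hqa ▸ hpq)).swap_sources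
  by_cases hqb : q = b
  · exact hqb ▸ ((hF p a b hab hp ha hb).rainbowLinkage (hqb ▸ hpq)).swap_targets.swap_sources
  rcases (by omega : p.val = k + 1 ∨ q.val = k + 1 ∨ a.val = k + 1 ∨ b.val = k + 1 ∨
      (p.val ≤ k ∧ q.val ≤ k ∧ a.val ≤ k ∧ b.val ≤ k)) with hp' | hq' | ha' | hb' | h
  · exact rainbowLinkage_of_source_top hfg hL hpq hab hpa hpb hp' hq ha hb
  · exact (rainbowLinkage_of_source_top hfg hL hpq.symm hab hqa hqb hq' hp ha hb).swap_sources
  · exact (rainbowLinkage_of_source_top hfg hL hab hpq (Ne.symm hpa) (Ne.symm hqa) ha' hb hp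
      hq).reverse
  · exact (rainbowLinkage_of_source_top hfg hL hab.symm hpq (Ne.symm hpb) (Ne.symm hqb) hb' ha
      hp hq).swap_sources.reverse
  · exact (hL p q a b hpq hab h.1 h.2.1 h.2.2.1 h.2.2.2).mono k.le_succ

lemma hasRainbowFans_and_linkages (hfg : ConstructionHyp n f g) (k : ℕ) :
    HasRainbowFans (constructionGraph n f g) k ∧
      HasRainbowLinkages (constructionGraph n f g) k := by
  induction k with
  | zero =>
    exact ⟨fun x a b hab _ ha hb => absurd (Fin.ext (by omega)) hab,
      fun p q _ _ hpq _ hp hq _ _ => absurd (Fin.ext (by omega)) hpq⟩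
  | succ k ih =>
    have hF := hasRainbowFans_succ hfg ih.1 ih.2
    exact ⟨hF, hasRainbowLinkages_succ hfg ih.2 hF⟩

end Construction

lemma exists_rainbowPaths_meeting_at_ends_of_lt {n : ℕ} {f g : Fin (n + 2) → Fin (n + 2)}
    (hfg : ConstructionHyp n f g) {u v : Fin (n + 2)} (hvu : v < u)
    (hne : s(u, v) ≠ s((0 : Fin (n + 2)), (1 : Fin (n + 2)))) :
    ∃ P₁ P₂ : (constructionGraph n f g).Walk u v,
      IsRainbowPath _ edgeColour P₁ ∧ IsRainbowPath _ edgeColour P₂ ∧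
      (∀ w ∈ P₁.support, w ∈ P₂.support → w = u ∨ w = v) ∧
      (s(u, v) ∉ P₁.edges ∨ s(u, v) ∉ P₂.edges) := by
  have hu : 2 ≤ u.val := by
    by_contra! hu
    obtain rfl : u = 1 := Fin.ext (by rw [Fin.val_one]; omega)
    obtain rfl : v = 0 := Fin.ext (by rw [Fin.val_zero]; omega)
    exact hne Sym2.eq_swap
  obtain ⟨hf, hg, hfg'⟩ := hfg u hu
  obtain ⟨Q₁, Q₂, h₁, h₂, hshare⟩ := (hasRainbowFans_and_linkages hfg (u.val - 1)).1
    v (f u) (g u) hfg' (by omega) (by omega) (by omega)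
  have hP₁ := h₁.reverse.cons (constructionGraph_adj_left hfg hu) (by omega) le_rfl
  have hP₂ := h₂.reverse.cons (constructionGraph_adj_right hfg hu) (by omega) le_rfl
  refine ⟨_, _, hP₁.1, hP₂.1, fun w hw₁ hw₂ => ?_, ?_⟩
  · simp only [support_cons, support_reverse, List.mem_cons, List.mem_reverse] at hw₁ hw₂
    rcases hw₁ with rfl | hw₁
    · exact Or.inl rfl
    rcases hw₂ with rfl | hw₂
    · exact Or.inl rfl
    exact Or.inr (hshare w hw₁ hw₂)
  · by_cases hfv : f u = v
    · exact Or.inr (not_mem_edges_cons_of_ne hP₂.1.1 fun hgv => hfg' (hfv.trans hgv.symm))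
    · exact Or.inl (not_mem_edges_cons_of_ne hP₁.1.1 hfv)

/-- in the construction graph on `n + 2` vertices, any two distinct
vertices `u, v` with `{u, v} ≠ {v₁₁, v₁₂}` are joined by two edge-disjoint rainbow
paths of total length at most `n + 2`. -/
theorem two_disjoint_rainbow_paths_same_ends (n : ℕ)
    (f g : Fin (n + 2) → Fin (n + 2)) (hfg : ConstructionHyp n f g)
    (u v : Fin (n + 2)) (huv : u ≠ v)
    (hne : s(u, v) ≠ s((0 : Fin (n + 2)), (1 : Fin (n + 2)))) :
    ∃ (P₁ P₂ : (constructionGraph n f g).Walk u v),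
      IsRainbowPath _ edgeColour P₁ ∧ IsRainbowPath _ edgeColour P₂ ∧
      EdgeDisjoint P₁ P₂ ∧ P₁.length + P₂.length ≤ n + 2 := by
  wlog hvu : v < u generalizing u v
  · obtain ⟨P₁, P₂, h₁, h₂, hdisj, hlen⟩ :=
      this v u huv.symm (by rwa [Sym2.eq_swap]) (by omega)
    exact ⟨P₁.reverse, P₂.reverse, h₁.reverse, h₂.reverse,
      fun e he₁ he₂ => hdisj e (by simpa using he₁) (by simpa using he₂), by simpa using hlen⟩
  obtain ⟨P₁, P₂, h₁, h₂, hshare, hmiss⟩ := exists_rainbowPaths_meeting_at_ends_of_lt hfg hvu hne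
  exact ⟨P₁, P₂, h₁, h₂, edgeDisjoint_of_support_inter hshare hmiss,
    by simpa using length_add_length_le_card h₁.1 h₂.1 hshare⟩
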